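/- Let M = (A,B,C,D) be a discrete-time system with system matrix S := [[A, B],[C, D]] ∈ ℂ^{(n+m)×(n+m)}. For ξ ≥ 0 define the structured perturbation Δ_S(ξ) := (ξ/(1+ξ))·(diag(0ₙ, I_m) − S), so that S + Δ_S(ξ) = (1/(1+ξ))·(S + diag(0ₙ, ξ·I_m)) is the system matrix of M_{−ξ}. Then: (i) the map ξ ↦ ‖Δ_S(ξ)‖₂ is nondecreasing on [0,∞); (ii) the set P := { ξ ≥ 0 : there exists Hermitian X > 0 with W̃(X, M_{−ξ}) ≥ 0 } is upward closed; consequently (iii) if Ξ := inf P belongs to P, then Δ_S(Ξ) has minimal spectral norm among all perturbations { Δ_S(ξ) : ξ ∈ P } of this type that make the system satisfy the passivity LMI. -/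

import Mathlib

/-!
Multiplying `W̃(X, M_{−ξ})` by `1 + ξ` gives `W̃(X, M) + ξ • diag(X, X, 2I)`, and the added term
is positive semidefinite, so a certificate `X` of the passivity LMI at `ξ₁` remains one at every
`ξ₂ ≥ ξ₁`. On the other side, `Δ_S(ξ)` is the fixed matrix `diag(0, I) − S` scaled by
`ξ / (1 + ξ)`, which increases on `[0, ∞)`. Hence the least feasible `ξ` yields the perturbation
of least spectral norm.
-/

open Matrix
open scoped ComplexOrder

/-- The spectral norm (largest singular value) of a complex matrix. -/
noncomputable def spNorm {k l : Type*} [Fintype k] [Fintype l] [DecidableEq k] [DecidableEq l]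
    (A : Matrix k l ℂ) : ℝ :=
  ‖(Matrix.toEuclideanLin A).toContinuousLinearMap‖

/-- The matrix `W̃(X,M) = [[X, XA, XB],[AᴴX, X, Cᴴ],[BᴴX, C, Dᴴ + D]]`. -/
noncomputable def Wtil {n m : ℕ} (X A : Matrix (Fin n) (Fin n) ℂ)
    (B : Matrix (Fin n) (Fin m) ℂ) (C : Matrix (Fin m) (Fin n) ℂ)
    (D : Matrix (Fin m) (Fin m) ℂ) :
    Matrix (Fin n ⊕ (Fin n ⊕ Fin m)) (Fin n ⊕ (Fin n ⊕ Fin m)) ℂ :=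
  fromBlocks X (fromCols (X * A) (X * B)) (fromRows (Aᴴ * X) (Bᴴ * X))
    (fromBlocks X Cᴴ C (Dᴴ + D))

theorem Matrix.PosSemidef.fromBlocks_zero {k l R : Type*} [Fintype k] [Fintype l]
    [CommRing R] [PartialOrder R] [StarRing R] [StarOrderedRing R]
    {M : Matrix k k R} {N : Matrix l l R} (hM : M.PosSemidef) (hN : N.PosSemidef) :
    (fromBlocks M 0 0 N).PosSemidef := by
  refine PosSemidef.of_dotProduct_mulVec_nonneg
    (hM.isHermitian.fromBlocks (by simp) hN.isHermitian) fun x => ?_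
  have hsplit : star x ⬝ᵥ (fromBlocks M 0 0 N *ᵥ x) =
      star (x ∘ Sum.inl) ⬝ᵥ (M *ᵥ (x ∘ Sum.inl)) +
        star (x ∘ Sum.inr) ⬝ᵥ (N *ᵥ (x ∘ Sum.inr)) := by
    simp [fromBlocks_mulVec, dotProduct, Fintype.sum_sum_type]
  rw [hsplit]
  exact add_nonneg (hM.dotProduct_mulVec_nonneg _) (hN.dotProduct_mulVec_nonneg _)

theorem spNorm_smul {k l : Type*} [Fintype k] [Fintype l] [DecidableEq k] [DecidableEq l]
    (c : ℝ) (A : Matrix k l ℂ) : spNorm (c • A) = |c| * spNorm A := by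
  rw [spNorm, spNorm, ← Complex.coe_smul, map_smul, LinearMap.toContinuousLinearMap.map_smul,
    norm_smul, Complex.norm_real, Real.norm_eq_abs]

theorem div_one_add_le_div_one_add {a b : ℝ} (ha : 0 ≤ a) (hab : a ≤ b) :
    a / (1 + a) ≤ b / (1 + b) := by
  rw [div_le_div_iff₀ (by linarith) (by linarith)]
  linarith

theorem spNorm_div_one_add_smul_le {k l : Type*} [Fintype k] [Fintype l] [DecidableEq k]
    [DecidableEq l] (E : Matrix k l ℂ) {ξ₁ ξ₂ : ℝ} (h₁ : 0 ≤ ξ₁) (h₁₂ : ξ₁ ≤ ξ₂) :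
    spNorm ((ξ₁ / (1 + ξ₁)) • E) ≤ spNorm ((ξ₂ / (1 + ξ₂)) • E) := by
  have h₂ : 0 ≤ ξ₂ := h₁.trans h₁₂
  rw [spNorm_smul, spNorm_smul, abs_of_nonneg (by positivity), abs_of_nonneg (by positivity)]
  exact mul_le_mul_of_nonneg_right (div_one_add_le_div_one_add h₁ h₁₂) (norm_nonneg _)

theorem add_div_one_add_smul_sub {V : Type*} [AddCommGroup V] [Module ℝ V] {ξ : ℝ}
    (hξ : 1 + ξ ≠ 0) (S E : V) :
    S + (ξ / (1 + ξ)) • (E - S) = (1 + ξ)⁻¹ • (S + ξ • E) := by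
  match_scalars
  · field_simp; ring
  · field_simp

section Shift

variable {n m : ℕ} (X A : Matrix (Fin n) (Fin n) ℂ) (B : Matrix (Fin n) (Fin m) ℂ)
  (C : Matrix (Fin m) (Fin n) ℂ) (D : Matrix (Fin m) (Fin m) ℂ)

/-- `W̃(X, M_{−ξ})`. -/
noncomputable def shiftedWtil (ξ : ℝ) :
    Matrix (Fin n ⊕ (Fin n ⊕ Fin m)) (Fin n ⊕ (Fin n ⊕ Fin m)) ℂ :=
  Wtil X ((1 + ξ)⁻¹ • A) ((1 + ξ)⁻¹ • B) ((1 + ξ)⁻¹ • C) ((1 + ξ)⁻¹ • (D + ξ • 1))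

theorem one_add_smul_shiftedWtil {ξ : ℝ} (hξ : 1 + ξ ≠ 0) :
    (1 + ξ) • shiftedWtil X A B C D ξ =
      Wtil X A B C D + ξ • fromBlocks X 0 0 (fromBlocks X 0 0 2) := by
  have hξ' : (1 + ξ : ℂ) ≠ 0 := by exact_mod_cast hξ
  ext (i | i | i) (j | j | j) <;>
    simp [shiftedWtil, Wtil, Complex.real_smul, Matrix.one_apply, ofNat_apply] <;>
    (try split_ifs) <;> field_simp <;> ring

variable {X A B C D} in
theorem shiftedWtil_posSemidef_of_le (hX : X.PosSemidef) {ξ₁ ξ₂ : ℝ} (h₁ : -1 < ξ₁)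
    (h₁₂ : ξ₁ ≤ ξ₂) (hW : (shiftedWtil X A B C D ξ₁).PosSemidef) :
    (shiftedWtil X A B C D ξ₂).PosSemidef := by
  set K := fromBlocks X 0 0 (fromBlocks X 0 0 (2 : Matrix (Fin m) (Fin m) ℂ))
  have hK : K.PosSemidef := hX.fromBlocks_zero (hX.fromBlocks_zero (.ofNat 2))
  have h₁' : 1 + ξ₁ ≠ 0 := by linarith
  have h₂' : 1 + ξ₂ ≠ 0 := by linarith
  have key : (1 + ξ₂) • shiftedWtil X A B C D ξ₂ =
      (1 + ξ₁) • shiftedWtil X A B C D ξ₁ + (ξ₂ - ξ₁) • K := by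
    rw [one_add_smul_shiftedWtil _ _ _ _ _ h₁', one_add_smul_shiftedWtil _ _ _ _ _ h₂',
      add_assoc, ← add_smul, add_sub_cancel]
  rw [← inv_smul_smul₀ h₂' (shiftedWtil X A B C D ξ₂), key]
  exact ((hW.smul (by linarith)).add (hK.smul (by linarith))).smul (inv_nonneg.2 (by linarith))

end Shift

theorem stmt17_general {n m : ℕ} (A : Matrix (Fin n) (Fin n) ℂ) (B : Matrix (Fin n) (Fin m) ℂ)
    (C : Matrix (Fin m) (Fin n) ℂ) (D : Matrix (Fin m) (Fin m) ℂ)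
    (S : Matrix (Fin n ⊕ Fin m) (Fin n ⊕ Fin m) ℂ)
    (ΔS : ℝ → Matrix (Fin n ⊕ Fin m) (Fin n ⊕ Fin m) ℂ)
    (hΔS : ∀ ξ : ℝ, ΔS ξ = (ξ / (1 + ξ)) •
      (fromBlocks (0 : Matrix (Fin n) (Fin n) ℂ) 0 0 (1 : Matrix (Fin m) (Fin m) ℂ) - S))
    (P : Set ℝ)
    (hP : P = {ξ : ℝ | 0 ≤ ξ ∧ ∃ X : Matrix (Fin n) (Fin n) ℂ, X.PosDef ∧
      (Wtil X ((1 + ξ)⁻¹ • A) ((1 + ξ)⁻¹ • B) ((1 + ξ)⁻¹ • C)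
        ((1 + ξ)⁻¹ • (D + ξ • (1 : Matrix (Fin m) (Fin m) ℂ)))).PosSemidef}) :
    -- the structured perturbation is indeed the system matrix of `M_{−ξ}`
    (∀ ξ : ℝ, 0 ≤ ξ → S + ΔS ξ = (1 + ξ)⁻¹ •
      (S + fromBlocks (0 : Matrix (Fin n) (Fin n) ℂ) 0 0
        (ξ • (1 : Matrix (Fin m) (Fin m) ℂ))))
    -- (i)
    ∧ (∀ ξ₁ ξ₂ : ℝ, 0 ≤ ξ₁ → ξ₁ ≤ ξ₂ → spNorm (ΔS ξ₁) ≤ spNorm (ΔS ξ₂))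
    -- (ii)
    ∧ (∀ ξ₁ ∈ P, ∀ ξ₂ : ℝ, ξ₁ ≤ ξ₂ → ξ₂ ∈ P)
    -- (iii)
    ∧ (sInf P ∈ P → ∀ ξ ∈ P, spNorm (ΔS (sInf P)) ≤ spNorm (ΔS ξ)) := by
  have hΔS_le (ξ₁ ξ₂ : ℝ) (h₁ : 0 ≤ ξ₁) (h₁₂ : ξ₁ ≤ ξ₂) : spNorm (ΔS ξ₁) ≤ spNorm (ΔS ξ₂) := by
    simpa only [hΔS] using spNorm_div_one_add_smul_le _ h₁ h₁₂
  have hP_nonneg : ∀ ξ ∈ P, 0 ≤ ξ := by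
    subst hP
    exact fun ξ hξ => hξ.1
  refine ⟨fun ξ hξ => ?_, hΔS_le, fun ξ₁ hξ₁ ξ₂ h₁₂ => ?_, fun hInf ξ hξ => ?_⟩
  · rw [hΔS, add_div_one_add_smul_sub (by linarith), fromBlocks_smul]
    simp only [smul_zero]
  · subst hP
    obtain ⟨h₁, X, hX, hW⟩ := hξ₁
    exact ⟨h₁.trans h₁₂, X, hX, shiftedWtil_posSemidef_of_le hX.posSemidef (by linarith) h₁₂ hW⟩
  · exact hΔS_le _ _ (hP_nonneg _ hInf) (csInf_le ⟨0, hP_nonneg⟩ hξ)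

/-- with `S = [[A,B],[C,D]]` and the structured perturbation
`Δ_S(ξ) = (ξ/(1+ξ))·(diag(0,I_m) − S)` (so that `S + Δ_S(ξ)` is the system matrix of
`M_{−ξ}`): (i) `ξ ↦ ‖Δ_S(ξ)‖₂` is nondecreasing on `[0,∞)`; (ii) the set `P` of `ξ ≥ 0`
for which `M_{−ξ}` satisfies the passivity LMI is upward closed; (iii) if `Ξ = inf P ∈ P`
then `Δ_S(Ξ)` has minimal spectral norm among all perturbations `Δ_S(ξ)`, `ξ ∈ P`. -/
theorem stmt17 {n m : ℕ} (A : Matrix (Fin n) (Fin n) ℂ) (B : Matrix (Fin n) (Fin m) ℂ)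
    (C : Matrix (Fin m) (Fin n) ℂ) (D : Matrix (Fin m) (Fin m) ℂ)
    (S : Matrix (Fin n ⊕ Fin m) (Fin n ⊕ Fin m) ℂ) (hS : S = fromBlocks A B C D)
    (ΔS : ℝ → Matrix (Fin n ⊕ Fin m) (Fin n ⊕ Fin m) ℂ)
    (hΔS : ∀ ξ : ℝ, ΔS ξ = (ξ / (1 + ξ)) •
      (fromBlocks (0 : Matrix (Fin n) (Fin n) ℂ) 0 0 (1 : Matrix (Fin m) (Fin m) ℂ) - S))
    (P : Set ℝ)
    (hP : P = {ξ : ℝ | 0 ≤ ξ ∧ ∃ X : Matrix (Fin n) (Fin n) ℂ, X.PosDef ∧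
      (Wtil X ((1 + ξ)⁻¹ • A) ((1 + ξ)⁻¹ • B) ((1 + ξ)⁻¹ • C)
        ((1 + ξ)⁻¹ • (D + ξ • (1 : Matrix (Fin m) (Fin m) ℂ)))).PosSemidef}) :
    -- the structured perturbation is indeed the system matrix of `M_{−ξ}`
    (∀ ξ : ℝ, 0 ≤ ξ → S + ΔS ξ = (1 + ξ)⁻¹ •
      (S + fromBlocks (0 : Matrix (Fin n) (Fin n) ℂ) 0 0
        (ξ • (1 : Matrix (Fin m) (Fin m) ℂ))))
    -- (i)
    ∧ (∀ ξ₁ ξ₂ : ℝ, 0 ≤ ξ₁ → ξ₁ ≤ ξ₂ → spNorm (ΔS ξ₁) ≤ spNorm (ΔS ξ₂))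
    -- (ii)
    ∧ (∀ ξ₁ ∈ P, ∀ ξ₂ : ℝ, ξ₁ ≤ ξ₂ → ξ₂ ∈ P)
    -- (iii)
    ∧ (sInf P ∈ P → ∀ ξ ∈ P, spNorm (ΔS (sInf P)) ≤ spNorm (ΔS ξ)) :=
  stmt17_general A B C D S ΔS hΔS P hP
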